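/- Let A ∈ ℕ^{m×n} and b ∈ ℕ^m. The system Ax = b has a solution x ∈ ℕ^n if and only if a certain explicit linear program is feasible: namely, there exist nonnegative reals (y_{jα}), indexed by j = 1,…,n and multi-indices α ∈ ℕ^m with |α| ≤ b* := ∑_i b_i - min_k ∑_i A_{ik}, such that for every monomial z^γ, the coefficient of z^γ in ∑_{j=1}^n (∑_α y_{jα} z^α)(z^{A_j} - 1) equals the coefficient of z^γ in z^b - 1. -/

import Mathlib

/-!
Write `a j` for the exponent of the `j`-th column, so that `z^{A_j} = monomial (a j) 1`.
If `P`, `Q` solve the system for `β` and `γ`, then `P + z^β Q` solves it for `β + γ`, because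
`z^{β+γ} - 1 = (z^β - 1) + z^β (z^γ - 1)`; with `Pi.single j 1` for `a j`, every `b` in the monoid
generated by the columns has a solution with `α + a j ≤ b` for each exponent `α` of `Q j`, which
gives the degree bound.

Conversely, read `∑ j, Q j * (z^{a j} - 1) = z^b - 1` as a nonnegative flow on `ℕ^m` sending
`coeff α (Q j)` from `α` to `α + a j`: the net inflow is `1` at `b`, `-1` at `0`, and `0` elsewhere.
Let `T` be the finite set of `0` and the `α + a j` with `α` in the support of `Q j`, cut down to
the monoid generated by the columns. No flow leaves `T`, so the net inflow into `T` is
nonnegative; as `0 ∈ T`, also `b ∈ T`.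
-/

open MvPolynomial

theorem Finset.sum_comp_le_sum_of_injective {α M : Type*} [AddCommMonoid M] [PartialOrder M]
    [IsOrderedAddMonoid M] {T : Finset α} {f : α → M} {e : α → α} (he : Function.Injective e)
    (hf : ∀ x ∈ T, 0 ≤ f x) (hT : ∀ x ∈ T, f (e x) ≠ 0 → e x ∈ T) :
    ∑ x ∈ T, f (e x) ≤ ∑ x ∈ T, f x := by
  classical
  calc ∑ x ∈ T, f (e x) = ∑ x ∈ T with f (e x) ≠ 0, f (e x) := (sum_filter_ne_zero _).symm
    _ = ∑ y ∈ (T.filter fun x => f (e x) ≠ 0).image e, f y := (sum_image he.injOn).symm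
    _ ≤ ∑ y ∈ T, f y := by
      refine sum_le_sum_of_subset_of_nonneg (image_subset_iff.2 fun x hx => ?_)
        fun y hy _ => hf y hy
      rw [mem_filter] at hx
      exact hT x hx.1 hx.2

namespace DiscreteFarkas

open Finset

section Certificate

variable {σ ι R : Type*} [Fintype ι] [CommRing R] [PartialOrder R] (a : ι → σ →₀ ℕ)

structure IsCertificate (β : σ →₀ ℕ) (Q : ι → MvPolynomial σ R) : Prop where
  coeff_nonneg : ∀ j d, 0 ≤ (Q j).coeff d
  add_le : ∀ j, ∀ α ∈ (Q j).support, α + a j ≤ β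
  sum_eq : ∑ j, Q j * (monomial (a j) 1 - 1) = monomial β 1 - 1

theorem isCertificate_zero : IsCertificate a 0 (0 : ι → MvPolynomial σ R) where
  coeff_nonneg := by simp
  add_le := by simp
  sum_eq := by simp

theorem isCertificate_single [IsOrderedRing R] [DecidableEq ι] (j : ι) :
    IsCertificate a (a j) (Pi.single j 1 : ι → MvPolynomial σ R) where
  coeff_nonneg k d := by
    rcases eq_or_ne k j with rfl | hk
    · classical
      rw [Pi.single_eq_same, coeff_one]
      split_ifs <;> simp
    · simp [hk]
  add_le k α hα := by
    rcases eq_or_ne k j with rfl | hk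
    · classical
      rw [Pi.single_eq_same, mem_support_iff, coeff_one] at hα
      split_ifs at hα with h0
      · simp [← h0]
      · exact absurd rfl hα
    · simp [hk] at hα
  sum_eq := by
    simp only [Pi.single_apply, ite_mul, one_mul, zero_mul, sum_ite_eq', mem_univ, if_true]

variable {a}

theorem IsCertificate.add [IsOrderedRing R] {β γ : σ →₀ ℕ} {P Q : ι → MvPolynomial σ R}
    (hP : IsCertificate a β P) (hQ : IsCertificate a γ Q) :
    IsCertificate a (β + γ) (fun j => P j + monomial β 1 * Q j) where
  coeff_nonneg j d := by
    rw [coeff_add, coeff_monomial_mul', one_mul]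
    exact add_nonneg (hP.coeff_nonneg j d) (by split_ifs <;> simp [hQ.coeff_nonneg])
  add_le j α hα := by
    classical
    rcases Finset.mem_union.1 (support_add hα) with hα | hα
    · exact (hP.add_le j α hα).trans le_self_add
    · rw [mem_support_iff, coeff_monomial_mul', one_mul] at hα
      split_ifs at hα with hβ
      · have := hQ.add_le j _ (mem_support_iff.2 hα)
        calc α + a j = β + (α - β + a j) := by rw [← add_assoc, add_tsub_cancel_of_le hβ]
          _ ≤ β + γ := add_le_add_right this β
      · exact absurd rfl hα
  sum_eq := by
    rw [sum_congr rfl fun j _ => by rw [add_mul, mul_assoc], sum_add_distrib, ← mul_sum,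
      hP.sum_eq, hQ.sum_eq, mul_sub, monomial_mul, one_mul, mul_one]
    abel

theorem exists_isCertificate_of_mem_closure [IsOrderedRing R] {β : σ →₀ ℕ}
    (hβ : β ∈ AddSubmonoid.closure (Set.range a)) :
    ∃ Q : ι → MvPolynomial σ R, IsCertificate a β Q := by
  classical
  induction hβ using AddSubmonoid.closure_induction with
  | mem _ h =>
    obtain ⟨j, rfl⟩ := h
    exact ⟨_, isCertificate_single a j⟩
  | zero => exact ⟨0, isCertificate_zero a⟩
  | add _ _ _ _ hβ hγ =>
    obtain ⟨P, hP⟩ := hβ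
    obtain ⟨Q, hQ⟩ := hγ
    exact ⟨_, hP.add hQ⟩

end Certificate

section Flow

variable {σ ι R : Type*} [Fintype ι] [CommRing R]

theorem coeff_mul_monomial_sub_one (p : MvPolynomial σ R) (s γ : σ →₀ ℕ) :
    coeff γ (p * (monomial s 1 - 1)) = (if s ≤ γ then coeff (γ - s) p else 0) - coeff γ p := by
  rw [mul_sub, mul_one, coeff_sub, coeff_mul_monomial', mul_one]

variable [PartialOrder R] [IsOrderedRing R] {a : ι → σ →₀ ℕ} {Q : ι → MvPolynomial σ R}

theorem sum_coeff_sum_mul_monomial_sub_one_nonneg (hQ : ∀ j d, 0 ≤ (Q j).coeff d)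
    {T : Finset (σ →₀ ℕ)} (hT : ∀ α ∈ T, ∀ j, coeff α (Q j) ≠ 0 → α + a j ∈ T) :
    0 ≤ ∑ γ ∈ T, coeff γ (∑ j, Q j * (monomial (a j) 1 - 1)) := by
  simp only [coeff_sum, coeff_mul_monomial_sub_one]
  rw [sum_comm]
  refine sum_nonneg fun j _ => ?_
  rw [sum_sub_distrib, sub_nonneg]
  have hshift := Finset.sum_comp_le_sum_of_injective (T := T)
    (f := fun γ => if a j ≤ γ then coeff (γ - a j) (Q j) else 0) (add_left_injective (a j))
    (fun γ _ => by split_ifs <;> simp [hQ]) (fun α hα h => hT α hα j (by simpa using h))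
  simpa using hshift

theorem mem_closure_of_sum_eq [Nontrivial R] {β : σ →₀ ℕ} (hQ : ∀ j d, 0 ≤ (Q j).coeff d)
    (h : ∑ j, Q j * (monomial (a j) 1 - 1) = monomial β 1 - 1) :
    β ∈ AddSubmonoid.closure (Set.range a) := by
  classical
  let S := AddSubmonoid.closure (Set.range a)
  let T : Finset (σ →₀ ℕ) :=
    (insert 0 (univ.biUnion fun j => (Q j).support.image (· + a j))).filter (· ∈ S)
  have h0 : 0 ∈ T := mem_filter.2 ⟨mem_insert_self _ _, S.zero_mem⟩
  have hT : ∀ α ∈ T, ∀ j, coeff α (Q j) ≠ 0 → α + a j ∈ T := by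
    intro α hα j hj
    refine mem_filter.2 ⟨mem_insert_of_mem (mem_biUnion.2 ⟨j, mem_univ j, ?_⟩), ?_⟩
    · exact mem_image_of_mem _ (mem_support_iff.2 hj)
    · exact S.add_mem (mem_filter.1 hα).2 (AddSubmonoid.subset_closure ⟨j, rfl⟩)
  have hflow := sum_coeff_sum_mul_monomial_sub_one_nonneg hQ hT
  simp only [h, coeff_sub, coeff_monomial, coeff_one, sum_sub_distrib, sum_ite_eq, h0,
    if_true] at hflow
  by_contra hβ
  have hβT : β ∉ T := fun hβT => hβ (mem_filter.1 hβT).2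
  rw [if_neg hβT] at hflow
  norm_num at hflow

end Flow

theorem totalDegree_le_degree_sub_of_add_le {σ R : Type*} [CommSemiring R]
    {p : MvPolynomial σ R} {c β : σ →₀ ℕ} (h : ∀ α ∈ p.support, α + c ≤ β) :
    p.totalDegree ≤ β.degree - c.degree :=
  Finset.sup_le fun α hα => Nat.le_sub_of_add_le <| by
    rw [show (α.sum fun _ e => e) = α.degree from rfl, ← map_add]
    exact Finsupp.degree_mono (h α hα)

theorem exists_sum_mul_eq_iff_mem_closure {σ ι : Type*} [Fintype σ] [Fintype ι]
    (A : Matrix σ ι ℕ) (b : σ → ℕ) :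
    (∃ x : ι → ℕ, ∀ i, ∑ j, A i j * x j = b i) ↔
      Finsupp.equivFunOnFinite.symm b ∈
        AddSubmonoid.closure (Set.range fun j => Finsupp.equivFunOnFinite.symm fun i => A i j) := by
  rw [AddSubmonoid.mem_closure_range_iff_of_fintype]
  refine exists_congr fun x => ?_
  rw [eq_comm, Finsupp.ext_iff]
  simp [Finsupp.finsetSum_apply, mul_comm]

theorem prod_X_pow_eq_monomial_equivFunOnFinite {σ R : Type*} [Fintype σ] [CommSemiring R]
    (f : σ → ℕ) :
    ∏ i, (X i : MvPolynomial σ R) ^ f i = monomial (Finsupp.equivFunOnFinite.symm f) 1 := by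
  rw [prod_X_pow]
  congr
  ext i
  exact Finsupp.indicator_of_mem (mem_univ i) _

end DiscreteFarkas

open DiscreteFarkas in
theorem discrete_farkas_as_LP
    (m n : ℕ) (A : Matrix (Fin m) (Fin n) ℕ) (b : Fin m → ℕ) :
    (∃ x : Fin n → ℕ, ∀ i, ∑ j, A i j * x j = b i) ↔
    (∃ Q : Fin n → MvPolynomial (Fin m) ℝ,
      (∀ j d, 0 ≤ (Q j).coeff d) ∧
      (∀ j, (Q j).totalDegree ≤ (∑ i, b i) - ⨅ k, ∑ i, A i k) ∧
      ∀ γ : Fin m →₀ ℕ,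
        (∑ j, Q j * ((∏ i, X i ^ A i j) - 1)).coeff γ =
        ((∏ i, X i ^ b i : MvPolynomial (Fin m) ℝ) - 1).coeff γ) := by
  simp only [prod_X_pow_eq_monomial_equivFunOnFinite]
  rw [exists_sum_mul_eq_iff_mem_closure]
  constructor
  · intro hb
    obtain ⟨Q, hQ⟩ := exists_isCertificate_of_mem_closure (R := ℝ) hb
    refine ⟨Q, hQ.coeff_nonneg, fun j => ?_, fun γ => by rw [hQ.sum_eq]⟩
    refine (totalDegree_le_degree_sub_of_add_le (hQ.add_le j)).trans ?_
    simp only [Finsupp.degree_eq_sum, Finsupp.coe_equivFunOnFinite_symm]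
    exact Nat.sub_le_sub_left (ciInf_le (OrderBot.bddBelow _) (f := fun k => ∑ i, A i k) j) _
  · rintro ⟨Q, hQ, -, h⟩
    exact mem_closure_of_sum_eq hQ (MvPolynomial.ext _ _ h)
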